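/- arXiv:1608.01445 — 5 statements merged into one kernel-verified Lean document; each statement's English description precedes it below -/
import Mathlib

section
/- Let k ≥ 1, let G be a minimally k-matchable graph, and let x be a vertex of G of degree d := deg_G(x) ≥ 2. Then (d − 1) · |𝔐(G)| ≤ d · (k − 1), i.e., |𝔐(G)| ≤ (d/(d−1)) · (k − 1). -/
open SimpleGraph

/-- `M` is a perfect matching of the graph `G`, viewed as a set of edges:
every vertex is an endvertex of exactly one member of `M`. -/
def IsPerfMatching {V : Type*} (G : SimpleGraph V) (M : Set (Sym2 V)) : Prop :=
  M ⊆ G.edgeSet ∧ ∀ v : V, ∃! e, e ∈ M ∧ v ∈ e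

/-- The number of perfect matchings of `G`. -/
noncomputable def numPM {V : Type*} (G : SimpleGraph V) : ℕ :=
  {M : Set (Sym2 V) | IsPerfMatching G M}.ncard

/-- `G` is `k`-matchable: it has at least `k` perfect matchings. -/
def Matchable {V : Type*} (k : ℕ) (G : SimpleGraph V) : Prop :=
  k ≤ numPM G

/-- `G` is minimally `k`-matchable. -/
def MinMatchable {V : Type*} (k : ℕ) (G : SimpleGraph V) : Prop :=
  Matchable k G ∧ ∀ e ∈ G.edgeSet, ¬ Matchable k (G.deleteEdges {e})

/-- `H` is an odd subdivision of `G`: every edge of `G` is replaced by a path of odd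
length connecting its endvertices, all these paths pairwise internally disjoint. -/
def IsOddSubdivisionOf {W V : Type*} (H : SimpleGraph W) (G : SimpleGraph V) : Prop :=
  ∃ (f : V ↪ W) (P : ∀ u v : V, G.Adj u v → H.Walk (f u) (f v)),
    (∀ u v (h : G.Adj u v), P v u h.symm = (P u v h).reverse) ∧
    (∀ u v (h : G.Adj u v), (P u v h).IsPath) ∧
    (∀ u v (h : G.Adj u v), Odd (P u v h).length) ∧
    (∀ u v (h : G.Adj u v), ∀ w ∈ (P u v h).support,
        (∃ x, w = f x) → w = f u ∨ w = f v) ∧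
    (∀ u v (h : G.Adj u v) u' v' (h' : G.Adj u' v'), s(u, v) ≠ s(u', v') →
        ∀ w, w ∈ (P u v h).support → w ∈ (P u' v' h').support → ∃ x, w = f x) ∧
    (∀ w : W, (∃ x, w = f x) ∨ ∃ (u v : _) (h : G.Adj u v), w ∈ (P u v h).support) ∧
    (∀ e ∈ H.edgeSet, ∃ (u v : _) (h : G.Adj u v), e ∈ (P u v h).edges)

/-- `G` is the disjoint union of an odd subdivision of `H` and any number (possibly zero)
of vertex-disjoint copies of `K₂`: there is a set `A` of vertices such that no edge of `G`
joins `A` to its complement, every vertex outside `A` has exactly one neighbour (these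
vertices span the copies of `K₂`), and the subgraph induced on `A` is an odd subdivision
of `H`. -/
def IsOddSubdivPlusK2 {W V : Type*} (H : SimpleGraph W) (G : SimpleGraph V) : Prop :=
  ∃ A : Set V,
    (∀ e ∈ G.edgeSet, (∀ v ∈ e, v ∈ A) ∨ (∀ v ∈ e, v ∉ A)) ∧
    (∀ v : V, v ∉ A → ∃! w, G.Adj v w) ∧
    IsOddSubdivisionOf (G.induce A) H

/-!
Every perfect matching of `G` covers `x` by exactly one of the `d` edges at `x`, so
double counting gives `∑_{e ∋ x} |{M : e ∈ M}| = |𝔐(G)|`, while the matchings avoiding `e`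
are those of `G - e`. Hence `d · |𝔐(G)| = |𝔐(G)| + ∑_{e ∋ x} |𝔐(G - e)|`, and
minimality bounds each `|𝔐(G - e)|` by `k - 1`.
-/

open Finset

namespace SimpleGraph

variable {V : Type*} {G : SimpleGraph V} {M : Set (Sym2 V)}

lemma isPerfMatching_deleteEdges_iff {e : Sym2 V} :
    IsPerfMatching (G.deleteEdges {e}) M ↔ IsPerfMatching G M ∧ e ∉ M := by
  simp only [IsPerfMatching, edgeSet_deleteEdges, Set.subset_sdiff,
    Set.disjoint_singleton_right]
  tauto

lemma IsPerfMatching.card_filter_incidenceFinset [Fintype V] [DecidableEq V]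
    [DecidableRel G.Adj] [DecidablePred (· ∈ M)] (hM : IsPerfMatching G M) (x : V) :
    #{e ∈ G.incidenceFinset x | e ∈ M} = 1 := by
  obtain ⟨hsub, hunique⟩ := hM
  rw [card_eq_one_iff_existsUnique]
  refine (hunique x).imp fun e => ?_
  simp only [mem_filter, mem_incidenceFinset, incidenceSet, Set.mem_ofPred_eq]
  exact fun ⟨⟨heM, hxe⟩, huniq⟩ =>
    ⟨⟨⟨hsub heM, hxe⟩, heM⟩, fun f ⟨⟨_, hxf⟩, hfM⟩ => huniq f ⟨hfM, hxf⟩⟩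

variable [Fintype V]

variable (G) in
noncomputable def perfMatchings : Finset (Set (Sym2 V)) :=
  (Set.toFinite {M | IsPerfMatching G M}).toFinset

@[simp]
lemma mem_perfMatchings : M ∈ G.perfMatchings ↔ IsPerfMatching G M :=
  Set.Finite.mem_toFinset _

variable (G) in
lemma card_perfMatchings : #G.perfMatchings = numPM G :=
  (Set.ncard_eq_toFinset_card _ _).symm

open scoped Classical in
lemma card_perfMatchings_filter_notMem (e : Sym2 V) :
    #{M ∈ G.perfMatchings | e ∉ M} = numPM (G.deleteEdges {e}) := by
  rw [← card_perfMatchings]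
  congr 1
  ext M
  simp only [mem_filter, mem_perfMatchings, isPerfMatching_deleteEdges_iff]

open scoped Classical in
lemma sum_card_perfMatchings_filter_mem [DecidableEq V] [DecidableRel G.Adj] (x : V) :
    ∑ e ∈ G.incidenceFinset x, #{M ∈ G.perfMatchings | e ∈ M} = numPM G := by
  rw [← card_perfMatchings, card_eq_sum_ones]
  refine (sum_card_bipartiteAbove_eq_sum_card_bipartiteBelow (r := fun M e => e ∈ M)).symm.trans
    (sum_congr rfl fun M hM => ?_)
  exact (mem_perfMatchings.1 hM).card_filter_incidenceFinset x

variable (G) in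
lemma degree_mul_numPM [DecidableEq V] [DecidableRel G.Adj] (x : V) :
    G.degree x * numPM G = numPM G + ∑ e ∈ G.incidenceFinset x, numPM (G.deleteEdges {e}) := by
  classical
  calc G.degree x * numPM G = ∑ _e ∈ G.incidenceFinset x, #G.perfMatchings := by
        rw [sum_const, card_incidenceFinset_eq_degree, card_perfMatchings, smul_eq_mul]
    _ = ∑ e ∈ G.incidenceFinset x,
          (#{M ∈ G.perfMatchings | e ∈ M} + #{M ∈ G.perfMatchings | e ∉ M}) := by
        simp only [card_filter_add_card_filter_not]
    _ = _ := by
        rw [sum_add_distrib, sum_card_perfMatchings_filter_mem]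
        simp only [card_perfMatchings_filter_notMem]

end SimpleGraph

theorem numPM_le_of_minMatchable_general (k : ℕ) {V : Type} [Fintype V]
    (G : SimpleGraph V) [DecidableRel G.Adj] (hG : MinMatchable k G)
    (x : V) :
    (G.degree x - 1) * numPM G ≤ G.degree x * (k - 1) := by
  classical
  have hdel : ∀ e ∈ G.incidenceFinset x, numPM (G.deleteEdges {e}) ≤ k - 1 := fun e he =>
    Nat.le_sub_one_of_lt (not_le.1 (hG.2 e ((G.mem_incidenceFinset x e).1 he).1))
  have hsum : ∑ e ∈ G.incidenceFinset x, numPM (G.deleteEdges {e}) ≤ G.degree x * (k - 1) :=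
    (sum_le_sum hdel).trans_eq (by rw [sum_const, card_incidenceFinset_eq_degree, smul_eq_mul])
  have hcount := G.degree_mul_numPM x
  rw [Nat.sub_one_mul]
  omega

/-- **Lemma 1 (first part).** If `G` is minimally `k`-matchable and `x` is a vertex of degree
`d ≥ 2`, then `(d - 1) * |𝔐(G)| ≤ d * (k - 1)`. -/
theorem numPM_le_of_minMatchable (k : ℕ) (hk : 1 ≤ k) {V : Type} [Fintype V]
    (G : SimpleGraph V) [DecidableRel G.Adj] (hG : MinMatchable k G)
    (x : V) (hd : 2 ≤ G.degree x) :
    (G.degree x - 1) * numPM G ≤ G.degree x * (k - 1) :=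
  numPM_le_of_minMatchable_general k G hG x
end

section
/- Let k ≥ 1 and let G be a minimally k-matchable graph containing at least one vertex of degree at least 2. Then |𝔐(G)| ≤ 2k − 2. -/
/-! A vertex `x` with two distinct neighbours `y`, `z` is covered by exactly one
edge of each perfect matching, so every perfect matching avoids `xy` or `xz`. Hence
`|𝔐(G)| ≤ |𝔐(G - xy)| + |𝔐(G - xz)|`, and by minimality each term is at most `k - 1`. -/

open SimpleGraph

theorem IsPerfMatching.eq_of_mem_of_mem {V : Type*} {G : SimpleGraph V} {M : Set (Sym2 V)}
    (hM : IsPerfMatching G M) {x : V} {e₁ e₂ : Sym2 V}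
    (he₁ : e₁ ∈ M) (hx₁ : x ∈ e₁) (he₂ : e₂ ∈ M) (hx₂ : x ∈ e₂) : e₁ = e₂ :=
  (hM.2 x).unique ⟨he₁, hx₁⟩ ⟨he₂, hx₂⟩

theorem isPerfMatching_deleteEdges_singleton_iff {V : Type*} {G : SimpleGraph V}
    {e : Sym2 V} {M : Set (Sym2 V)} :
    IsPerfMatching (G.deleteEdges {e}) M ↔ IsPerfMatching G M ∧ e ∉ M := by
  simp only [IsPerfMatching, edgeSet_deleteEdges, Set.subset_sdiff,
    Set.disjoint_singleton_right]
  tauto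

theorem numPM_le_numPM_deleteEdges_add {V : Type*} [Finite V] (G : SimpleGraph V)
    {x : V} {e₁ e₂ : Sym2 V} (hne : e₁ ≠ e₂) (hx₁ : x ∈ e₁) (hx₂ : x ∈ e₂) :
    numPM G ≤ numPM (G.deleteEdges {e₁}) + numPM (G.deleteEdges {e₂}) := by
  have hcover : {M | IsPerfMatching G M} ⊆
      {M | IsPerfMatching (G.deleteEdges {e₁}) M} ∪
        {M | IsPerfMatching (G.deleteEdges {e₂}) M} := by
    intro M hM
    simp only [Set.mem_union, Set.mem_ofPred_eq, isPerfMatching_deleteEdges_singleton_iff]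
    by_contra! hboth
    exact hne (hM.eq_of_mem_of_mem (hboth.1 hM) hx₁ (hboth.2 hM) hx₂)
  exact (Set.ncard_le_ncard hcover (Set.toFinite _)).trans (Set.ncard_union_le _ _)

theorem MinMatchable.numPM_deleteEdges_lt {V : Type*} {k : ℕ} {G : SimpleGraph V}
    (hG : MinMatchable k G) {e : Sym2 V} (he : e ∈ G.edgeSet) :
    numPM (G.deleteEdges {e}) < k :=
  not_le.mp (hG.2 e he)

theorem numPM_le_two_k_sub_two_general (k : ℕ) {V : Type} [Fintype V]
    (G : SimpleGraph V) [DecidableRel G.Adj] (hG : MinMatchable k G)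
    (h : ∃ x : V, 2 ≤ G.degree x) :
    numPM G ≤ 2 * k - 2 := by
  obtain ⟨x, hx⟩ := h
  obtain ⟨y, hy, z, hz, hyz⟩ :
      ∃ y ∈ G.neighborFinset x, ∃ z ∈ G.neighborFinset x, y ≠ z :=
    Finset.one_lt_card.mp (by rw [card_neighborFinset_eq_degree]; omega)
  rw [mem_neighborFinset] at hy hz
  have hne : s(x, y) ≠ s(x, z) := fun h ↦ hyz (Sym2.congr_right.mp h)
  have h₁ := hG.numPM_deleteEdges_lt (e := s(x, y)) hy
  have h₂ := hG.numPM_deleteEdges_lt (e := s(x, z)) hz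
  have := numPM_le_numPM_deleteEdges_add G hne (Sym2.mem_mk_left x y) (Sym2.mem_mk_left x z)
  omega

/-- **Lemma 1 (second part).** If `G` is minimally `k`-matchable and has a vertex of degree
at least `2`, then `|𝔐(G)| ≤ 2k - 2`. -/
theorem numPM_le_two_k_sub_two (k : ℕ) (hk : 1 ≤ k) {V : Type} [Fintype V]
    (G : SimpleGraph V) [DecidableRel G.Adj] (hG : MinMatchable k G)
    (h : ∃ x : V, 2 ≤ G.degree x) :
    numPM G ≤ 2 * k - 2 :=
  numPM_le_two_k_sub_two_general k G hG h
end

section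
/- Let k ≥ 1 and let G be a minimally k-matchable graph. Then every vertex of G has degree at most |𝔐(G)|, the number of perfect matchings of G. -/
open SimpleGraph

/-!
In a minimally `k`-matchable graph every edge `e` lies in some perfect matching: otherwise
all perfect matchings of `G` survive in `G - e`, which would then still be `k`-matchable.
Choosing such a matching for each edge at a vertex `x` gives an injection from the edges at
`x` into `𝔐(G)`, since a perfect matching contains only one edge at `x`.
-/

section PerfectMatchings

variable {V : Type*} {G G' : SimpleGraph V} {M : Set (Sym2 V)}

theorem IsPerfMatching.of_subset_edgeSet (hM : IsPerfMatching G M) (h : M ⊆ G'.edgeSet) :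
    IsPerfMatching G' M :=
  ⟨h, hM.2⟩

theorem IsPerfMatching.eq_of_mem_of_mem_s6 {e e' : Sym2 V} {x : V} (hM : IsPerfMatching G M)
    (he : e ∈ M) (hxe : x ∈ e) (he' : e' ∈ M) (hxe' : x ∈ e') : e = e' :=
  (hM.2 x).unique ⟨he, hxe⟩ ⟨he', hxe'⟩

theorem numPM_le_numPM_deleteEdges [Finite V] {e : Sym2 V}
    (h : ∀ M, IsPerfMatching G M → e ∉ M) : numPM G ≤ numPM (G.deleteEdges {e}) := by
  refine Set.ncard_le_ncard (fun M hM => hM.of_subset_edgeSet ?_) (Set.toFinite _)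
  intro f hf
  rw [edgeSet_deleteEdges]
  exact ⟨hM.1 hf, fun hfe => h M hM (Set.mem_singleton_iff.1 hfe ▸ hf)⟩

theorem MinMatchable.exists_isPerfMatching_mem [Finite V] {k : ℕ} (hG : MinMatchable k G)
    {e : Sym2 V} (he : e ∈ G.edgeSet) : ∃ M, IsPerfMatching G M ∧ e ∈ M := by
  by_contra! h
  exact hG.2 e he (hG.1.trans (numPM_le_numPM_deleteEdges h))

theorem degree_le_numPM_of_forall_mem_isPerfMatching [Fintype V] [DecidableRel G.Adj] (x : V)
    (h : ∀ e ∈ G.incidenceSet x, ∃ M, IsPerfMatching G M ∧ e ∈ M) : G.degree x ≤ numPM G := by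
  classical
  choose! F hF hmem using h
  calc G.degree x = (G.incidenceSet x).ncard := by
        rw [← card_incidenceSet_eq_degree, Set.ncard_eq_toFinset_card', Set.toFinset_card]
    _ ≤ numPM G := Set.ncard_le_ncard_of_injOn F hF fun e he e' he' hFe =>
        (hF e he).eq_of_mem_of_mem_s6 (hmem e he) he.2 (hFe ▸ hmem e' he') he'.2

end PerfectMatchings

theorem degree_le_numPM_of_minMatchable_general (k : ℕ) {V : Type} [Fintype V]
    (G : SimpleGraph V) [DecidableRel G.Adj] (hG : MinMatchable k G) :
    ∀ x : V, G.degree x ≤ numPM G := fun x =>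
  degree_le_numPM_of_forall_mem_isPerfMatching x fun _ he => hG.exists_isPerfMatching_mem he.1

/-- If `G` is minimally `k`-matchable, then every vertex of `G` has degree at most
`|𝔐(G)|`, the number of perfect matchings of `G`. -/
theorem degree_le_numPM_of_minMatchable (k : ℕ) (hk : 1 ≤ k) {V : Type} [Fintype V]
    (G : SimpleGraph V) [DecidableRel G.Adj] (hG : MinMatchable k G) :
    ∀ x : V, G.degree x ≤ numPM G :=
  degree_le_numPM_of_minMatchable_general k G hG
end

section
/- Let H be a graph with an edge wz, and let G be obtained from H by deleting the edge wz and adding two new vertices x, y together with the edges wx, xy, yz (i.e., wz is replaced by a path w–x–y–z of length 3). Then the map ψ defined by ψ(M) := (M \ {wz}) ∪ {wx, yz} if wz ∈ M, and ψ(M) := M ∪ {xy} if wz ∉ M, is a bijection from 𝔐(H) onto 𝔐(G); in particular |𝔐(G)| = |𝔐(H)|. -/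
open SimpleGraph

/-- The graph obtained from `H` by deleting the edge `wz` and adding two new vertices
`x := .inr 0` and `y := .inr 1` together with the edges `wx`, `xy`, `yz`
(i.e. `wz` is replaced by a path `w–x–y–z` of length 3). -/
def replaceEdgeByPath3 {V : Type*} (H : SimpleGraph V) (w z : V) :
    SimpleGraph (V ⊕ Fin 2) :=
  SimpleGraph.fromRel fun a b =>
    (∃ a' b', a = Sum.inl a' ∧ b = Sum.inl b' ∧ H.Adj a' b' ∧ s(a', b') ≠ s(w, z)) ∨
    (a = Sum.inl w ∧ b = Sum.inr 0) ∨
    (a = Sum.inr 0 ∧ b = Sum.inr 1) ∨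
    (a = Sum.inr 1 ∧ b = Sum.inl z)

/-- The map `ψ` of Lemma 2: `ψ(M) := (M \ {wz}) ∪ {wx, yz}` if `wz ∈ M`, and
`ψ(M) := M ∪ {xy}` if `wz ∉ M` (edges of `M` transported along the inclusion `Sum.inl`). -/
noncomputable def psiPath3 {V : Type*} (w z : V) (M : Set (Sym2 V)) :
    Set (Sym2 (V ⊕ Fin 2)) := by
  classical
  exact if s(w, z) ∈ M then
      (Sym2.map Sum.inl '' (M \ {s(w, z)})) ∪
        {s(Sum.inl w, Sum.inr 0), s(Sum.inr 1, Sum.inl z)}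
    else (Sym2.map Sum.inl '' M) ∪ {s(Sum.inr 0, Sum.inr 1)}

/-!
Write `x := inr 0`, `y := inr 1` and count, at each vertex, the matching edges through it. `ψ`
keeps this number at every old vertex (at `w` and `z` the edge `wz` is traded for `wx`, resp.
`yz`) and makes it `1` at `x` and `y`, so `ψ M` is a perfect matching of `G` iff `M` is one of
`H`. Pulling edges back along `inl` and adding `wz` when `wx` is present is a left inverse of `ψ`;
it is also a right inverse on `𝔐(G)`, because a perfect matching of `G` contains either `xy`
alone or both `wx` and `yz` among the three new edges.
-/

section IsPerfMatching

variable {α β : Type*} {M N : Set (Sym2 α)} {e : Sym2 α} {v : α}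

theorem IsPerfMatching.exists_mem {G : SimpleGraph α} (hM : IsPerfMatching G M) (v : α) :
    ∃ e ∈ M, v ∈ e :=
  (hM.2 v).exists.imp fun _ => id

theorem IsPerfMatching.eq_of_mem {G : SimpleGraph α} (hM : IsPerfMatching G M) {f : Sym2 α}
    (he : e ∈ M) (hf : f ∈ M) (hve : v ∈ e) (hvf : v ∈ f) : e = f :=
  (hM.2 v).unique ⟨he, hve⟩ ⟨hf, hvf⟩

noncomputable def incidenceCount (M : Set (Sym2 α)) (v : α) : ℕ∞ :=
  (M ∩ {e | v ∈ e}).encard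

theorem existsUnique_mem_iff_incidenceCount_eq_one :
    (∃! e, e ∈ M ∧ v ∈ e) ↔ incidenceCount M v = 1 := by
  rw [incidenceCount, Set.encard_eq_one, Set.singleton_iff_unique_mem]
  rfl

theorem isPerfMatching_iff_incidenceCount (G : SimpleGraph α) :
    IsPerfMatching G M ↔ M ⊆ G.edgeSet ∧ ∀ v, incidenceCount M v = 1 := by
  simp only [IsPerfMatching, existsUnique_mem_iff_incidenceCount_eq_one]

theorem incidenceCount_union (h : Disjoint M N) :
    incidenceCount (M ∪ N) v = incidenceCount M v + incidenceCount N v := by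
  rw [incidenceCount, Set.union_inter_distrib_right,
    Set.encard_union_eq (h.mono Set.inter_subset_left Set.inter_subset_left)]
  rfl

@[simp]
theorem incidenceCount_singleton_of_mem (h : v ∈ e) : incidenceCount {e} v = 1 := by
  simp [incidenceCount, h]

@[simp]
theorem incidenceCount_singleton_of_notMem (h : v ∉ e) : incidenceCount {e} v = 0 := by
  simp [incidenceCount, h]

theorem incidenceCount_insert (he : e ∉ M) :
    incidenceCount (insert e M) v = incidenceCount {e} v + incidenceCount M v := by
  rw [Set.insert_eq, incidenceCount_union (Set.disjoint_singleton_left.mpr he)]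

theorem incidenceCount_image_map {f : α → β} (hf : Function.Injective f) (M : Set (Sym2 α))
    (v : α) : incidenceCount (Sym2.map f '' M) (f v) = incidenceCount M v := by
  have hpre : Sym2.map f ⁻¹' {e | f v ∈ e} = {e | v ∈ e} := by
    ext e
    simp [hf.eq_iff]
  rw [incidenceCount, ← Set.image_inter_preimage, hpre,
    (Sym2.map.injective hf).injOn.encard_image]
  rfl

theorem incidenceCount_image_map_of_notMem_range {f : α → β} {u : β} (hu : u ∉ Set.range f)
    (M : Set (Sym2 α)) : incidenceCount (Sym2.map f '' M) u = 0 := by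
  simp only [incidenceCount, Set.encard_eq_zero, Set.eq_empty_iff_forall_notMem]
  rintro _ ⟨⟨e, -, rfl⟩, hu'⟩
  obtain ⟨a, -, rfl⟩ := Sym2.mem_map.mp hu'
  exact hu ⟨a, rfl⟩

end IsPerfMatching

section replaceEdgeByPath3

open Sum

variable {V : Type*} {H : SimpleGraph V} {w z : V}

theorem edgeSet_replaceEdgeByPath3 :
    (replaceEdgeByPath3 H w z).edgeSet = Sym2.map inl '' (H.edgeSet \ {s(w, z)}) ∪
      {s(inl w, inr 0), s(inr 0, inr 1), s(inr 1, inl z)} := by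
  ext e
  induction e using Sym2.ind with
  | _ a b =>
    rcases a with a | a <;> rcases b with b | b <;>
      simp [replaceEdgeByPath3, Sym2.exists] <;> grind [SimpleGraph.Adj.ne, SimpleGraph.Adj.symm]

theorem map_inl_mem_edgeSet_replaceEdgeByPath3 {e : Sym2 V} :
    Sym2.map inl e ∈ (replaceEdgeByPath3 H w z).edgeSet ↔
      e ∈ H.edgeSet ∧ e ≠ s(w, z) := by
  rw [edgeSet_replaceEdgeByPath3, Set.mem_union,
    (Sym2.map.injective inl_injective).mem_set_image, or_iff_left]
  · rfl
  · induction e using Sym2.ind with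
    | _ a b => simp

theorem map_inl_ne_of_inr_mem {e : Sym2 V} {e' : Sym2 (V ⊕ Fin 2)} {c : Fin 2}
    (hc : inr c ∈ e') : Sym2.map inl e ≠ e' := by
  rintro rfl
  simp at hc

theorem preimage_map_inl_eq_empty {T : Set (Sym2 (V ⊕ Fin 2))}
    (hT : ∀ e ∈ T, ∃ c, inr c ∈ e) : Sym2.map inl ⁻¹' T = ∅ :=
  Set.eq_empty_of_forall_notMem fun _ he =>
    have ⟨_, hc⟩ := hT _ he
    map_inl_ne_of_inr_mem hc rfl

theorem disjoint_image_map_inl {S : Set (Sym2 V)} {T : Set (Sym2 (V ⊕ Fin 2))}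
    (hT : ∀ e ∈ T, ∃ c, inr c ∈ e) : Disjoint (Sym2.map inl '' S) T := by
  rw [Set.disjoint_image_left, preimage_map_inl_eq_empty hT]
  exact Set.disjoint_empty _

theorem psiPath3_of_mem {M : Set (Sym2 V)} (h : s(w, z) ∈ M) :
    psiPath3 w z M = Sym2.map inl '' (M \ {s(w, z)}) ∪ {s(inl w, inr 0), s(inr 1, inl z)} :=
  if_pos h

theorem psiPath3_of_notMem {M : Set (Sym2 V)} (h : s(w, z) ∉ M) :
    psiPath3 w z M = Sym2.map inl '' M ∪ {s(inr 0, inr 1)} :=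
  if_neg h

theorem preimage_map_inl_edgeSet_replaceEdgeByPath3 :
    Sym2.map inl ⁻¹' (replaceEdgeByPath3 H w z).edgeSet = H.edgeSet \ {s(w, z)} :=
  Set.ext fun _ => map_inl_mem_edgeSet_replaceEdgeByPath3

theorem psiPath3_subset_edgeSet_iff (hwz : H.Adj w z) {M : Set (Sym2 V)} :
    psiPath3 w z M ⊆ (replaceEdgeByPath3 H w z).edgeSet ↔ M ⊆ H.edgeSet := by
  by_cases h : s(w, z) ∈ M
  · rw [psiPath3_of_mem h, Set.union_subset_iff, Set.image_subset_iff,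
      preimage_map_inl_edgeSet_replaceEdgeByPath3, and_iff_left (by
        simp [Set.insert_subset_iff, edgeSet_replaceEdgeByPath3])]
    refine ⟨fun hM => ?_, Set.sdiff_subset_sdiff_left⟩
    rw [← Set.insert_eq_of_mem (H.mem_edgeSet.mpr hwz), ← Set.sdiff_singleton_subset_iff]
    exact hM.trans Set.sdiff_subset
  · rw [psiPath3_of_notMem h, Set.union_subset_iff, Set.image_subset_iff,
      preimage_map_inl_edgeSet_replaceEdgeByPath3, and_iff_left (by
        simp [edgeSet_replaceEdgeByPath3]), Set.subset_sdiff, Set.disjoint_singleton_right,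
      and_iff_left h]

theorem incidenceCount_psiPath3_inl (hwz : w ≠ z) (M : Set (Sym2 V)) (v : V) :
    incidenceCount (psiPath3 w z M) (inl v) = incidenceCount M v := by
  by_cases h : s(w, z) ∈ M
  · have hends : incidenceCount ({s(inl w, inr 0), s(inr 1, inl z)} : Set (Sym2 (V ⊕ Fin 2)))
        (inl v) = incidenceCount {s(w, z)} v := by
      rw [incidenceCount_insert (by simp)]
      by_cases hvw : v = w <;> by_cases hvz : v = z <;> simp_all
    calc incidenceCount (psiPath3 w z M) (inl v)
        = incidenceCount (M \ {s(w, z)}) v + incidenceCount {s(w, z)} v := by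
          rw [psiPath3_of_mem h, incidenceCount_union (disjoint_image_map_inl (by simp)),
            incidenceCount_image_map inl_injective, hends]
      _ = incidenceCount M v := by
          rw [← incidenceCount_union Set.disjoint_sdiff_left, Set.sdiff_union_of_subset
            (Set.singleton_subset_iff.mpr h)]
  · rw [psiPath3_of_notMem h, incidenceCount_union (disjoint_image_map_inl (by simp)),
      incidenceCount_image_map inl_injective, incidenceCount_singleton_of_notMem (by simp),
      add_zero]

theorem incidenceCount_psiPath3_inr (M : Set (Sym2 V)) (c : Fin 2) :
    incidenceCount (psiPath3 w z M) (inr c) = 1 := by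
  have hc : inr c ∉ Set.range (inl : V → V ⊕ Fin 2) := by simp
  by_cases h : s(w, z) ∈ M
  · rw [psiPath3_of_mem h, incidenceCount_union (disjoint_image_map_inl (by simp)),
      incidenceCount_image_map_of_notMem_range hc, zero_add, incidenceCount_insert (by simp)]
    fin_cases c <;> simp
  · rw [psiPath3_of_notMem h, incidenceCount_union (disjoint_image_map_inl (by simp)),
      incidenceCount_image_map_of_notMem_range hc, zero_add]
    fin_cases c <;> simp

theorem isPerfMatching_psiPath3_iff (hwz : H.Adj w z) {M : Set (Sym2 V)} :
    IsPerfMatching (replaceEdgeByPath3 H w z) (psiPath3 w z M) ↔ IsPerfMatching H M := by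
  simp only [isPerfMatching_iff_incidenceCount, psiPath3_subset_edgeSet_iff hwz, Sum.forall,
    incidenceCount_psiPath3_inl hwz.ne, incidenceCount_psiPath3_inr, forall_const, and_true]

theorem eq_or_eq_of_inr_zero_mem {e : Sym2 (V ⊕ Fin 2)}
    (he : e ∈ (replaceEdgeByPath3 H w z).edgeSet) (hx : inr 0 ∈ e) :
    e = s(inl w, inr 0) ∨ e = s(inr 0, inr 1) := by
  rw [edgeSet_replaceEdgeByPath3] at he
  rcases he with ⟨e, -, rfl⟩ | he
  · simp at hx
  · simp only [Set.mem_insert_iff, Set.mem_singleton_iff] at he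
    rcases he with rfl | rfl | rfl <;> simp_all

theorem eq_or_eq_of_inr_one_mem {e : Sym2 (V ⊕ Fin 2)}
    (he : e ∈ (replaceEdgeByPath3 H w z).edgeSet) (hy : inr 1 ∈ e) :
    e = s(inr 0, inr 1) ∨ e = s(inr 1, inl z) := by
  rw [edgeSet_replaceEdgeByPath3] at he
  rcases he with ⟨e, -, rfl⟩ | he
  · simp at hy
  · simp only [Set.mem_insert_iff, Set.mem_singleton_iff] at he
    rcases he with rfl | rfl | rfl <;> simp_all

theorem IsPerfMatching.replaceEdgeByPath3_cases {N : Set (Sym2 (V ⊕ Fin 2))}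
    (hN : IsPerfMatching (replaceEdgeByPath3 H w z) N) :
    (s(inl w, inr 0) ∈ N ∧ s(inr 0, inr 1) ∉ N ∧ s(inr 1, inl z) ∈ N) ∨
      (s(inl w, inr 0) ∉ N ∧ s(inr 0, inr 1) ∈ N ∧ s(inr 1, inl z) ∉ N) := by
  by_cases hxy : s(inr 0, inr 1) ∈ N
  · refine .inr ⟨fun hwx => ?_, hxy, fun hyz => ?_⟩
    · simpa using hN.eq_of_mem hwx hxy (v := inr 0) (by simp) (by simp)
    · simpa using hN.eq_of_mem hyz hxy (v := inr 1) (by simp) (by simp)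
  · obtain ⟨ex, hex, hx⟩ := hN.exists_mem (inr 0)
    obtain ⟨ey, hey, hy⟩ := hN.exists_mem (inr 1)
    rcases eq_or_eq_of_inr_zero_mem (hN.1 hex) hx with rfl | rfl <;>
      rcases eq_or_eq_of_inr_one_mem (hN.1 hey) hy with rfl | rfl <;>
      tauto

open Classical in
noncomputable def psiPath3Inv (w z : V) (N : Set (Sym2 (V ⊕ Fin 2))) : Set (Sym2 V) :=
  if s(inl w, inr 0) ∈ N then insert s(w, z) (Sym2.map inl ⁻¹' N) else Sym2.map inl ⁻¹' N

theorem psiPath3Inv_psiPath3 : Function.LeftInverse (psiPath3Inv w z) (psiPath3 w z) := by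
  intro M
  have hinj := Sym2.map.injective (inl_injective : Function.Injective (inl : V → V ⊕ Fin 2))
  by_cases h : s(w, z) ∈ M
  · rw [psiPath3_of_mem h, psiPath3Inv, if_pos (by simp), Set.preimage_union,
      hinj.preimage_image, preimage_map_inl_eq_empty (by simp), Set.union_empty,
      Set.insert_sdiff_singleton, Set.insert_eq_of_mem h]
  · have hwx : (s(inl w, inr 0) : Sym2 (V ⊕ Fin 2)) ∉
        Sym2.map inl '' M ∪ {s(inr 0, inr 1)} := by
      rintro (⟨e, -, he⟩ | he)
      · exact map_inl_ne_of_inr_mem (c := 0) (by simp) he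
      · simp at he
    rw [psiPath3_of_notMem h, psiPath3Inv, if_neg hwx, Set.preimage_union,
      hinj.preimage_image, preimage_map_inl_eq_empty (by simp), Set.union_empty]

theorem eq_image_preimage_map_inl_union {N : Set (Sym2 (V ⊕ Fin 2))}
    (hN : N ⊆ (replaceEdgeByPath3 H w z).edgeSet) :
    N = Sym2.map inl '' (Sym2.map inl ⁻¹' N) ∪
      N ∩ {s(inl w, inr 0), s(inr 0, inr 1), s(inr 1, inl z)} := by
  rw [Set.image_preimage_eq_inter_range, ← Set.inter_union_distrib_left, eq_comm,
    Set.inter_eq_left]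
  refine hN.trans ?_
  rw [edgeSet_replaceEdgeByPath3]
  exact Set.union_subset_union_left _ (Set.image_subset_range _ _)

theorem psiPath3_psiPath3Inv {N : Set (Sym2 (V ⊕ Fin 2))}
    (hN : IsPerfMatching (replaceEdgeByPath3 H w z) N) :
    psiPath3 w z (psiPath3Inv w z N) = N := by
  have hwz : s(w, z) ∉ Sym2.map inl ⁻¹' N := fun h =>
    (map_inl_mem_edgeSet_replaceEdgeByPath3.mp (hN.1 h)).2 rfl
  rcases hN.replaceEdgeByPath3_cases with ⟨hwx, hxy, hyz⟩ | ⟨hwx, hxy, hyz⟩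
  · rw [psiPath3Inv, if_pos hwx, psiPath3_of_mem (Set.mem_insert _ _),
      Set.insert_sdiff_self_of_notMem hwz]
    refine Eq.trans ?_ (eq_image_preimage_map_inl_union hN.1).symm
    congr 1
    ext e
    simp only [Set.mem_insert_iff, Set.mem_singleton_iff, Set.mem_inter_iff]
    aesop
  · rw [psiPath3Inv, if_neg hwx, psiPath3_of_notMem hwz]
    refine Eq.trans ?_ (eq_image_preimage_map_inl_union hN.1).symm
    congr 1
    ext e
    simp only [Set.mem_insert_iff, Set.mem_singleton_iff, Set.mem_inter_iff]
    aesop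

end replaceEdgeByPath3

theorem bijOn_psiPath3_general {V : Type} (H : SimpleGraph V) (w z : V)
    (hwz : H.Adj w z) :
    Set.BijOn (psiPath3 w z)
      {M | IsPerfMatching H M}
      {M | IsPerfMatching (replaceEdgeByPath3 H w z) M} ∧
    numPM (replaceEdgeByPath3 H w z) = numPM H := by
  have hbij : Set.BijOn (psiPath3 w z) {M | IsPerfMatching H M}
      {M | IsPerfMatching (replaceEdgeByPath3 H w z) M} := by
    refine ⟨fun M hM => (isPerfMatching_psiPath3_iff hwz).mpr hM,
      psiPath3Inv_psiPath3.injective.injOn, fun N hN => ?_⟩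
    have hψ := psiPath3_psiPath3Inv hN
    exact ⟨psiPath3Inv w z N, (isPerfMatching_psiPath3_iff hwz).mp (by rwa [hψ]), hψ⟩
  refine ⟨hbij, ?_⟩
  rw [numPM, numPM, ← hbij.image_eq, hbij.injOn.ncard_image]

/-- Let `G` be obtained from `H` by replacing the edge `wz` by a path `w–x–y–z` of
length 3 (with new vertices `x, y`). Then `ψ` is a bijection from `𝔐(H)` onto `𝔐(G)`;
in particular `|𝔐(G)| = |𝔐(H)|`. -/
theorem bijOn_psiPath3 {V : Type} [Fintype V] (H : SimpleGraph V) (w z : V)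
    (hwz : H.Adj w z) :
    Set.BijOn (psiPath3 w z)
      {M | IsPerfMatching H M}
      {M | IsPerfMatching (replaceEdgeByPath3 H w z) M} ∧
    numPM (replaceEdgeByPath3 H w z) = numPM H :=
  bijOn_psiPath3_general H w z hwz
end

section
/- Let k ≥ 1, let G be a minimally (k+1)-matchable graph, and let H be a spanning subgraph of G that is minimally k-matchable. Then every edge e ∈ E(G) \ E(H) is contained in every perfect matching N ∈ 𝔐(G) \ 𝔐(H), i.e., every perfect matching of G that is not a perfect matching of H contains all edges of E(G) \ E(H). -/
/- If `e ∉ N` for some `N ∈ 𝔐(G) \ 𝔐(H)` and `e ∈ E(G) \ E(H)`, then `G - e` still contains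
`H` and has the perfect matching `N` besides those of `H`, so `G - e` is `(k+1)`-matchable,
contradicting the minimality of `G`. -/

open SimpleGraph

lemma IsPerfMatching.mono {V : Type*} {G G' : SimpleGraph V} {M : Set (Sym2 V)} (hGG' : G ≤ G')
    (hM : IsPerfMatching G M) : IsPerfMatching G' M :=
  ⟨hM.1.trans (edgeSet_mono hGG'), hM.2⟩

lemma IsPerfMatching.deleteEdges {V : Type*} {G : SimpleGraph V} {M s : Set (Sym2 V)}
    (hM : IsPerfMatching G M) (hMs : Disjoint M s) : IsPerfMatching (G.deleteEdges s) M := by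
  refine ⟨?_, hM.2⟩
  rw [edgeSet_deleteEdges]
  exact Set.subset_sdiff.mpr ⟨hM.1, hMs⟩

lemma SimpleGraph.le_deleteEdges_singleton {V : Type*} {G H : SimpleGraph V} {e : Sym2 V}
    (hHG : H ≤ G) (he : e ∉ H.edgeSet) : H ≤ G.deleteEdges {e} := by
  rw [← edgeSet_subset_edgeSet, edgeSet_deleteEdges]
  exact Set.subset_sdiff_singleton (edgeSet_mono hHG) he

lemma setOf_isPerfMatching_mono {V : Type*} {G G' : SimpleGraph V} (hGG' : G ≤ G') :
    {M | IsPerfMatching G M} ⊆ {M | IsPerfMatching G' M} :=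
  fun _ hM ↦ hM.mono hGG'

lemma numPM_lt_numPM {V : Type*} {G H : SimpleGraph V} {N : Set (Sym2 V)} (hHG : H ≤ G)
    (hfin : {M | IsPerfMatching G M}.Finite) (hN : IsPerfMatching G N)
    (hNH : ¬ IsPerfMatching H N) : numPM H < numPM G :=
  Set.ncard_lt_ncard (Set.ssubset_iff_of_subset (setOf_isPerfMatching_mono hHG) |>.mpr
    ⟨N, hN, hNH⟩) hfin

lemma Matchable.finite_setOf_isPerfMatching {V : Type*} {G : SimpleGraph V} {k : ℕ}
    (hG : Matchable (k + 1) G) : {M | IsPerfMatching G M}.Finite :=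
  Set.finite_of_ncard_pos (Nat.lt_of_lt_of_le k.succ_pos hG)

theorem new_matchings_contain_new_edges_general (k : ℕ) {V : Type}
    (G H : SimpleGraph V) (hHG : H ≤ G)
    (hG : MinMatchable (k + 1) G) (hH : MinMatchable k H) :
    ∀ N : Set (Sym2 V), IsPerfMatching G N → ¬ IsPerfMatching H N →
      ∀ e ∈ G.edgeSet \ H.edgeSet, e ∈ N := by
  intro N hN hNH e ⟨heG, heH⟩
  by_contra heN
  have hHG' : H ≤ G.deleteEdges {e} := le_deleteEdges_singleton hHG heH
  have hNG' : IsPerfMatching (G.deleteEdges {e}) N :=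
    hN.deleteEdges (Set.disjoint_singleton_right.mpr heN)
  have hfin : {M | IsPerfMatching (G.deleteEdges {e}) M}.Finite :=
    hG.1.finite_setOf_isPerfMatching.subset (setOf_isPerfMatching_mono (deleteEdges_le _))
  exact hG.2 e heG (Nat.succ_le_of_lt (hH.1.trans_lt (numPM_lt_numPM hHG' hfin hNG' hNH)))

/-- **Claim 1 (first part).** Let `G` be minimally `(k+1)`-matchable and `H` a spanning
minimally `k`-matchable subgraph of `G`. Then every perfect matching of `G` that is not a
perfect matching of `H` contains all edges of `E(G) \ E(H)`. -/
theorem new_matchings_contain_new_edges (k : ℕ) (hk : 1 ≤ k) {V : Type} [Fintype V]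
    (G H : SimpleGraph V) (hHG : H ≤ G)
    (hG : MinMatchable (k + 1) G) (hH : MinMatchable k H) :
    ∀ N : Set (Sym2 V), IsPerfMatching G N → ¬ IsPerfMatching H N →
      ∀ e ∈ G.edgeSet \ H.edgeSet, e ∈ N :=
  new_matchings_contain_new_edges_general k G H hHG hG hH
end
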